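/- arXiv:2310.00218 — 2 statements merged into one kernel-verified Lean document; each statement's English description precedes it below -/
import Mathlib

section
/- Let Δ0 → Δ1 → ⋯ → Δk be a sequence of finite multisets of points in ℝ² where each Δ_{j-1} → Δ_j is a transformation by a rectangle R_j with diagonal points v_j = (a_j, b_j), w_j = (c_j, d_j). Define the signed area of R_j as −(a_j − c_j)(b_j − d_j) and f(Δ) = Σ_{(x,y) ∈ Δ} x·y. Then the sum of signed areas Σ_{j=1}^{k} (−(a_j − c_j)(b_j − d_j)) equals f(Δ_k) − f(Δ_0); in particular this sum depends only on Δ_0 and Δ_k and not on the chosen sequence of rectangles. -/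
/-! The statistic `f(Δ) = Σ x·y` changes under a transformation by the rectangle `R(v, w)` by
exactly its signed area, since `c·b + a·d - (a·b + c·d) = -(a - c)(b - d)`; summing over the
sequence of rectangles, the changes telescope to `f(Δₖ) - f(Δ₀)`. -/

noncomputable def rectTransform (v w : ℝ × ℝ) (Δ : Multiset (ℝ × ℝ)) : Multiset (ℝ × ℝ) :=
  (w.1, v.2) ::ₘ (v.1, w.2) ::ₘ ((Δ.erase v).erase w)

/-- `f(Δ) = Σ_{(x,y) ∈ Δ} x·y`. -/
def fsum (Δ : Multiset (ℝ × ℝ)) : ℝ := (Δ.map fun p => p.1 * p.2).sum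

lemma fsum_cons (p : ℝ × ℝ) (Δ : Multiset (ℝ × ℝ)) :
    fsum (p ::ₘ Δ) = p.1 * p.2 + fsum Δ := by
  simp [fsum]

lemma fsum_erase {p : ℝ × ℝ} {Δ : Multiset (ℝ × ℝ)} (hp : p ∈ Δ) :
    fsum (Δ.erase p) = fsum Δ - p.1 * p.2 := by
  rw [fsum, fsum, ← Multiset.sum_map_erase hp]
  ring

lemma fsum_rectTransform_sub {v w : ℝ × ℝ} {Δ : Multiset (ℝ × ℝ)} (hv : v ∈ Δ) (hw : w ∈ Δ)
    (hne : v ≠ w) :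
    fsum (rectTransform v w Δ) - fsum Δ = -((v.1 - w.1) * (v.2 - w.2)) := by
  have hw' : w ∈ Δ.erase v := (Multiset.mem_erase_of_ne hne.symm).2 hw
  rw [rectTransform, fsum_cons, fsum_cons, fsum_erase hw', fsum_erase hv]
  ring

theorem stmt_3 (k : ℕ) (Δ : ℕ → Multiset (ℝ × ℝ)) (v w : ℕ → ℝ × ℝ)
    (hv : ∀ j < k, v j ∈ Δ j) (hw : ∀ j < k, w j ∈ Δ j)
    (hne : ∀ j < k, v j ≠ w j)
    (hstep : ∀ j < k, Δ (j + 1) = rectTransform (v j) (w j) (Δ j)) :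
    ∑ j ∈ Finset.range k, (-(((v j).1 - (w j).1) * ((v j).2 - (w j).2)))
      = fsum (Δ k) - fsum (Δ 0) := by
  calc ∑ j ∈ Finset.range k, (-(((v j).1 - (w j).1) * ((v j).2 - (w j).2)))
      = ∑ j ∈ Finset.range k, (fsum (Δ (j + 1)) - fsum (Δ j)) := by
        refine Finset.sum_congr rfl fun j hj => ?_
        have hjk := Finset.mem_range.1 hj
        rw [hstep j hjk, fsum_rectTransform_sub (hv j hjk) (hw j hjk) (hne j hjk)]
    _ = fsum (Δ k) - fsum (Δ 0) := Finset.sum_range_sub (fun j => fsum (Δ j)) k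
end

section
/- Let v = (x1, y1), w = (x2, y2) be points in ℝ² with x1 ≠ x2 and y1 ≠ y2, and let ṽ = (x2, y1), w̃ = (x1, y2). Then every transformation (finite sequence of rectangle transformations) from the multiset {v, w} to the multiset {ṽ, w̃} has total area at least |x1 − x2|·|y1 − y2|, i.e., at least the area of the rectangle R(v, w); moreover the single transformation by R(v, w) attains this bound. -/
/-!
The quantity `∑ x * y` over the points of the multiset changes, under the transformation by the
rectangle with diagonal `p, q`, by exactly `-(p.1 - q.1) * (p.2 - q.2)`, whose absolute value is
the area of that rectangle. Going from `{(x1, y1), (x2, y2)}` to `{(x2, y1), (x1, y2)}` changes it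
by `-(x1 - x2) * (y1 - y2)`, so by the triangle inequality the total area is at least
`|x1 - x2| * |y1 - y2|`.
-/

noncomputable def coordProdSum (Δ : Multiset (ℝ × ℝ)) : ℝ :=
  (Δ.map fun p => p.1 * p.2).sum

lemma coordProdSum_pair (a b : ℝ × ℝ) : coordProdSum {a, b} = a.1 * a.2 + b.1 * b.2 := by
  simp [coordProdSum, Multiset.insert_eq_cons]

lemma coordProdSum_rectTransform {p q : ℝ × ℝ} {Δ : Multiset (ℝ × ℝ)} (hp : p ∈ Δ) (hq : q ∈ Δ)
    (hpq : p ≠ q) :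
    coordProdSum (rectTransform p q Δ) = coordProdSum Δ - (p.1 - q.1) * (p.2 - q.2) := by
  have hq' : q ∈ Δ.erase p := (Multiset.mem_erase_of_ne hpq.symm).mpr hq
  conv_rhs => rw [← Multiset.cons_erase hp, ← Multiset.cons_erase hq']
  simp only [rectTransform, coordProdSum, Multiset.map_cons, Multiset.sum_cons]
  ring

lemma abs_coordProdSum_sub_le_sum_area (Δ : ℕ → Multiset (ℝ × ℝ)) (p q : ℕ → ℝ × ℝ) (k : ℕ)
    (hp : ∀ j < k, p j ∈ Δ j) (hq : ∀ j < k, q j ∈ Δ j) (hpq : ∀ j < k, p j ≠ q j)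
    (hstep : ∀ j < k, Δ (j + 1) = rectTransform (p j) (q j) (Δ j)) :
    |coordProdSum (Δ k) - coordProdSum (Δ 0)| ≤
      ∑ j ∈ Finset.range k, |(p j).1 - (q j).1| * |(p j).2 - (q j).2| := by
  have hdiff : ∀ j ∈ Finset.range k, coordProdSum (Δ (j + 1)) - coordProdSum (Δ j) =
      -(((p j).1 - (q j).1) * ((p j).2 - (q j).2)) := by
    intro j hj
    have hj := Finset.mem_range.1 hj
    rw [hstep j hj, coordProdSum_rectTransform (hp j hj) (hq j hj) (hpq j hj)]
    ring
  rw [← Finset.sum_range_sub (fun j => coordProdSum (Δ j)), Finset.sum_congr rfl hdiff]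
  refine (Finset.abs_sum_le_sum_abs _ _).trans_eq ?_
  simp only [abs_neg, abs_mul]

theorem stmt_5_general (x1 y1 x2 y2 : ℝ)
    (v w vt wt : ℝ × ℝ) (hv : v = (x1, y1)) (hw : w = (x2, y2))
    (hvt : vt = (x2, y1)) (hwt : wt = (x1, y2)) :
    (∀ (k : ℕ) (Δ : ℕ → Multiset (ℝ × ℝ)) (p q : ℕ → ℝ × ℝ),
      Δ 0 = {v, w} → Δ k = {vt, wt} →
      (∀ j < k, p j ∈ Δ j) → (∀ j < k, q j ∈ Δ j) → (∀ j < k, p j ≠ q j) →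
      (∀ j < k, Δ (j + 1) = rectTransform (p j) (q j) (Δ j)) →
      ∑ j ∈ Finset.range k, |(p j).1 - (q j).1| * |(p j).2 - (q j).2|
        ≥ |x1 - x2| * |y1 - y2|) ∧
    rectTransform v w {v, w} = {vt, wt} ∧
    |v.1 - w.1| * |v.2 - w.2| = |x1 - x2| * |y1 - y2| := by
  subst hv hw hvt hwt
  refine ⟨fun k Δ p q h0 hk hp hq hpq hstep => ?_, ?_, rfl⟩
  · calc |x1 - x2| * |y1 - y2|
        = |coordProdSum (Δ k) - coordProdSum (Δ 0)| := by
          rw [hk, h0, coordProdSum_pair, coordProdSum_pair, ← abs_mul, ← abs_neg]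
          ring_nf
      _ ≤ _ := abs_coordProdSum_sub_le_sum_area Δ p q k hp hq hpq hstep
  · simp [rectTransform, Multiset.insert_eq_cons]

theorem stmt_5 (x1 y1 x2 y2 : ℝ) (hx : x1 ≠ x2) (hy : y1 ≠ y2)
    (v w vt wt : ℝ × ℝ) (hv : v = (x1, y1)) (hw : w = (x2, y2))
    (hvt : vt = (x2, y1)) (hwt : wt = (x1, y2)) :
    (∀ (k : ℕ) (Δ : ℕ → Multiset (ℝ × ℝ)) (p q : ℕ → ℝ × ℝ),
      Δ 0 = {v, w} → Δ k = {vt, wt} →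
      (∀ j < k, p j ∈ Δ j) → (∀ j < k, q j ∈ Δ j) → (∀ j < k, p j ≠ q j) →
      (∀ j < k, Δ (j + 1) = rectTransform (p j) (q j) (Δ j)) →
      ∑ j ∈ Finset.range k, |(p j).1 - (q j).1| * |(p j).2 - (q j).2|
        ≥ |x1 - x2| * |y1 - y2|) ∧
    rectTransform v w {v, w} = {vt, wt} ∧
    |v.1 - w.1| * |v.2 - w.2| = |x1 - x2| * |y1 - y2| :=
  stmt_5_general x1 y1 x2 y2 v w vt wt hv hw hvt hwt
end
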